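/- Let β ∈ (0,1) and λ > 1. There exists a constant C_d > 0 such that for every integer N ≥ 1, every choice of points x₁, …, x_N ∈ [−1/2,1/2]^d, and every measurable function ρ on [−1/2,1/2]^d with λ^{−1} ≤ ρ ≤ λ, the relative entropy of the mollified empirical density ρ^N(x) := (1/N) ∑_{i=1}^N V^N(x − x_i) with respect to ρ is finite, with the quantitative bound |∫_{[−1/2,1/2]^d} ρ^N(x) ln(ρ^N(x)/ρ(x)) dx| ≤ 2 e^{1/4} C_d N^β · ( ln(N^β) − ln(Γ(d/2)/(2π^{d/2})) + N^{2β/d} + ln 2 + 1/4 + C_d + ln λ ). -/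

import Mathlib

open MeasureTheory Real
open scoped NNReal BigOperators

noncomputable section

/-- The mollifier `V₀` from the paper (assumption (Aᵛ)). -/
def V0 (d : ℕ) (y : EuclideanSpace ℝ (Fin d)) : ℝ :=
  if ‖y‖ ≤ 1/2 then Real.Gamma ((d:ℝ)/2) / (2 * Real.pi ^ ((d:ℝ)/2)) * Real.exp (-‖y‖^2)
  else Real.Gamma ((d:ℝ)/2) / (2 * Real.pi ^ ((d:ℝ)/2)) * Real.exp (1/4) * Real.exp (-‖y‖)

/-- The scaled mollifier `V₀^N(y) = N^β V₀(N^{β/d} y)`. -/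
def V0N (d : ℕ) (β : ℝ) (N : ℕ) (y : EuclideanSpace ℝ (Fin d)) : ℝ :=
  (N:ℝ)^β * V0 d ((N:ℝ)^(β/(d:ℝ)) • y)

/-- An integer vector `k ∈ ℤ^d` viewed as an element of `ℝ^d`. -/
def intVec (d : ℕ) (k : Fin d → ℤ) : EuclideanSpace ℝ (Fin d) := WithLp.toLp 2 (fun i => (k i : ℝ))

/-- The periodized mollifier `V^N(x) = ∑_{k ∈ ℤ^d} V₀^N(x - k)`. -/
def VN (d : ℕ) (β : ℝ) (N : ℕ) (x : EuclideanSpace ℝ (Fin d)) : ℝ :=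
  ∑' k : Fin d → ℤ, V0N d β N (x - intVec d k)

/-- The fundamental domain `[0,1)^d` of the torus. -/
def box01 (d : ℕ) : Set (EuclideanSpace ℝ (Fin d)) := {x | ∀ i, x i ∈ Set.Ico (0:ℝ) 1}

/-- The fundamental domain `[-1/2,1/2]^d` of the torus. -/
def boxC (d : ℕ) : Set (EuclideanSpace ℝ (Fin d)) := {x | ∀ i, x i ∈ Set.Icc (-(1/2):ℝ) (1/2)}

section Stmt18Aux

lemma aux_sum_int_pow_le {r : ℝ} (hr0 : 0 ≤ r) (hr1 : r < 1) (t : Finset ℤ) :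
    ∑ m ∈ t, r ^ m.natAbs ≤ 2 * (1 - r)⁻¹ := by
  classical
  have hsum : Summable fun n : ℕ => r ^ n := summable_geometric_of_lt_one hr0 hr1
  have htsum : ∑' n : ℕ, r ^ n = (1 - r)⁻¹ := tsum_geometric_of_lt_one hr0 hr1
  have h1 : ∀ s : Finset ℤ, (∀ a ∈ s, ∀ b ∈ s, a.natAbs = b.natAbs → a = b) →
      ∑ m ∈ s, r ^ m.natAbs ≤ (1 - r)⁻¹ := by
    intro s hinj
    have he : ∑ n ∈ s.image Int.natAbs, r ^ n = ∑ m ∈ s, r ^ m.natAbs :=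
      Finset.sum_image hinj
    rw [← he, ← htsum]
    exact Summable.sum_le_tsum _ (fun n _ => pow_nonneg hr0 n) hsum
  have hsplit := Finset.sum_filter_add_sum_filter_not t (fun m => 0 ≤ m)
    (fun m => r ^ m.natAbs)
  have hpos := h1 (t.filter (fun m => 0 ≤ m)) (by
    intro a ha b hb hab
    have ha' := (Finset.mem_filter.1 ha).2
    have hb' := (Finset.mem_filter.1 hb).2
    omega)
  have hneg := h1 (t.filter (fun m => ¬ 0 ≤ m)) (by
    intro a ha b hb hab
    have ha' := (Finset.mem_filter.1 ha).2
    have hb' := (Finset.mem_filter.1 hb).2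
    omega)
  linarith

lemma aux_sum_pi_le {d : ℕ} {g : ℤ → ℝ} {T : ℝ} (hg0 : ∀ m, 0 ≤ g m)
    (hT : ∀ t : Finset ℤ, ∑ m ∈ t, g m ≤ T) (s : Finset (Fin d → ℤ)) :
    ∑ k ∈ s, ∏ i, g (k i) ≤ T ^ d := by
  classical
  have hsub : s ⊆ Fintype.piFinset (fun i => s.image fun k => k i) := by
    intro k hk
    rw [Fintype.mem_piFinset]
    exact fun i => Finset.mem_image_of_mem _ hk
  calc ∑ k ∈ s, ∏ i, g (k i)
      ≤ ∑ k ∈ Fintype.piFinset (fun i => s.image fun k => k i), ∏ i, g (k i) :=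
        Finset.sum_le_sum_of_subset_of_nonneg hsub
          (fun _k _ _ => Finset.prod_nonneg fun _i _ => hg0 _)
    _ = ∏ i, ∑ m ∈ s.image (fun k => k i), g m := (Finset.prod_univ_sum _ _).symm
    _ ≤ ∏ _i : Fin d, T := Finset.prod_le_prod
        (fun i _ => Finset.sum_nonneg fun m _ => hg0 m) (fun i _ => hT _)
    _ = T ^ d := by simp

lemma aux_summable_pi {d : ℕ} {g : ℤ → ℝ} {T : ℝ} (hg0 : ∀ m, 0 ≤ g m)
    (hT : ∀ t : Finset ℤ, ∑ m ∈ t, g m ≤ T) :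
    Summable (fun k : Fin d → ℤ => ∏ i, g (k i)) :=
  summable_of_sum_le (fun k => Finset.prod_nonneg fun i _ => hg0 _)
    (aux_sum_pi_le hg0 hT)

/-- the constant in `V0` -/
def cD (d : ℕ) : ℝ := Real.Gamma ((d:ℝ)/2) / (2 * Real.pi ^ ((d:ℝ)/2))

lemma cD_pos {d : ℕ} (hd : 1 ≤ d) : 0 < cD d := by
  apply div_pos
  · apply Real.Gamma_pos_of_pos
    have : (1:ℝ) ≤ (d:ℝ) := by exact_mod_cast hd
    linarith
  · positivity

lemma V0_nonneg {d : ℕ} (hd : 1 ≤ d) (y : EuclideanSpace ℝ (Fin d)) : 0 ≤ V0 d y := by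
  have hc := (cD_pos hd).le
  rw [V0]
  split
  · exact mul_nonneg hc (Real.exp_pos _).le
  · exact mul_nonneg (mul_nonneg hc (Real.exp_pos _).le) (Real.exp_pos _).le

lemma V0_le {d : ℕ} (hd : 1 ≤ d) (y : EuclideanSpace ℝ (Fin d)) :
    V0 d y ≤ cD d * Real.exp (1/4) * Real.exp (-‖y‖) := by
  have hc := (cD_pos hd).le
  rw [V0]
  split
  · show cD d * Real.exp (-‖y‖^2) ≤ _
    have h1 : Real.exp (-‖y‖^2) ≤ Real.exp (1/4) * Real.exp (-‖y‖) := by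
      rw [← Real.exp_add]
      apply Real.exp_le_exp.2
      nlinarith [sq_nonneg (‖y‖ - 1/2)]
    calc cD d * Real.exp (-‖y‖^2) ≤ cD d * (Real.exp (1/4) * Real.exp (-‖y‖)) :=
          mul_le_mul_of_nonneg_left h1 hc
      _ = _ := by ring
  · show cD d * Real.exp (1/4) * Real.exp (-‖y‖) ≤ _
    exact le_rfl

lemma V0N_nonneg {d : ℕ} (hd : 1 ≤ d) (β : ℝ) (N : ℕ) (y : EuclideanSpace ℝ (Fin d)) :
    0 ≤ V0N d β N y := by
  rw [V0N]
  exact mul_nonneg (Real.rpow_nonneg (Nat.cast_nonneg N) β) (V0_nonneg hd _)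

lemma V0N_le {d N : ℕ} {β : ℝ} (hd : 1 ≤ d) (hN : 1 ≤ N) (hβ : 0 < β)
    (y : EuclideanSpace ℝ (Fin d)) :
    V0N d β N y ≤ (N:ℝ)^β * (cD d * Real.exp (1/4)) * Real.exp (-‖y‖) := by
  have hN1 : (1:ℝ) ≤ (N:ℝ) := by exact_mod_cast hN
  have hs : (1:ℝ) ≤ (N:ℝ)^(β/(d:ℝ)) := by
    apply Real.one_le_rpow hN1
    positivity
  have hnorm : ‖(N:ℝ)^(β/(d:ℝ)) • y‖ = (N:ℝ)^(β/(d:ℝ)) * ‖y‖ := by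
    rw [norm_smul, Real.norm_eq_abs, abs_of_nonneg (by linarith)]
  have h1 : V0 d ((N:ℝ)^(β/(d:ℝ)) • y) ≤ cD d * Real.exp (1/4) * Real.exp (-‖y‖) := by
    refine le_trans (V0_le hd _) ?_
    apply mul_le_mul_of_nonneg_left _ (mul_nonneg (cD_pos hd).le (Real.exp_pos _).le)
    apply Real.exp_le_exp.2
    rw [hnorm]
    nlinarith [norm_nonneg y]
  rw [V0N]
  calc (N:ℝ)^β * V0 d ((N:ℝ)^(β/(d:ℝ)) • y)
      ≤ (N:ℝ)^β * (cD d * Real.exp (1/4) * Real.exp (-‖y‖)) :=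
        mul_le_mul_of_nonneg_left h1 (Real.rpow_nonneg (by linarith) β)
    _ = _ := by ring

lemma coord_abs_le_norm {d : ℕ} (x : EuclideanSpace ℝ (Fin d)) (i : Fin d) :
    |x i| ≤ ‖x‖ := by
  rw [EuclideanSpace.norm_eq, ← Real.sqrt_sq_eq_abs]
  apply Real.sqrt_le_sqrt
  calc (x i)^2 = ‖x i‖^2 := by rw [Real.norm_eq_abs, sq_abs]
    _ ≤ ∑ j, ‖x j‖^2 := Finset.single_le_sum (f := fun j => ‖x j‖^2) (fun j _ => sq_nonneg _) (Finset.mem_univ i)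

lemma exp_neg_norm_le_prod {d : ℕ} (hd : 1 ≤ d) (w : EuclideanSpace ℝ (Fin d)) :
    Real.exp (-‖w‖) ≤ ∏ i, Real.exp (-(d:ℝ)⁻¹ * |w i|) := by
  have hd0 : (0:ℝ) < (d:ℝ) := by exact_mod_cast hd
  rw [← Real.exp_sum]
  apply Real.exp_le_exp.2
  have hsum : ∑ i, |w i| ≤ (d:ℝ) * ‖w‖ := by
    calc ∑ i, |w i| ≤ ∑ _i : Fin d, ‖w‖ := Finset.sum_le_sum fun i _ => coord_abs_le_norm w i
      _ = (d:ℝ) * ‖w‖ := by simp [mul_comm]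
  have : ∑ i, -(d:ℝ)⁻¹ * |w i| = -(d:ℝ)⁻¹ * ∑ i, |w i| := by rw [Finset.mul_sum]
  rw [this]
  rw [neg_le, ← neg_mul, neg_neg]
  calc (d:ℝ)⁻¹ * ∑ i, |w i| ≤ (d:ℝ)⁻¹ * ((d:ℝ) * ‖w‖) :=
        mul_le_mul_of_nonneg_left hsum (by positivity)
    _ = ‖w‖ := by field_simp

lemma V0N_term_le {d N : ℕ} {β : ℝ} (hd : 1 ≤ d) (hN : 1 ≤ N) (hβ : 0 < β)
    (z : EuclideanSpace ℝ (Fin d)) (k : Fin d → ℤ) :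
    V0N d β N (z - intVec d k) ≤ (N:ℝ)^β * (cD d * Real.exp (1/4)) *
      ∏ i, (Real.exp ((d:ℝ)⁻¹ * |z i|) * Real.exp (-(d:ℝ)⁻¹) ^ (k i).natAbs) := by
  have hd0 : (0:ℝ) < (d:ℝ) := by exact_mod_cast hd
  have hγ : (0:ℝ) < (d:ℝ)⁻¹ := by positivity
  have hsub : ∀ i, (z - intVec d k) i = z i - (k i : ℝ) := fun i => by simp [intVec]
  have hcoord : ∀ i, Real.exp (-(d:ℝ)⁻¹ * |(z - intVec d k) i|) ≤
      Real.exp ((d:ℝ)⁻¹ * |z i|) * Real.exp (-(d:ℝ)⁻¹) ^ (k i).natAbs := by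
    intro i
    have h1 : |(k i : ℝ)| ≤ |z i - (k i : ℝ)| + |z i| := by
      have := abs_sub_abs_le_abs_sub (k i : ℝ) (z i)
      have h2 := abs_sub_comm (k i : ℝ) (z i)
      have h3 := abs_nonneg (z i)
      nlinarith [abs_sub (k i:ℝ) (z i)]
    have h4 : Real.exp (-(d:ℝ)⁻¹) ^ (k i).natAbs =
        Real.exp (-(d:ℝ)⁻¹ * |(k i : ℝ)|) := by
      rw [← Real.exp_nat_mul]
      congr 1
      rw [Nat.cast_natAbs]
      push_cast
      ring
    rw [h4, ← Real.exp_add, hsub i]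
    apply Real.exp_le_exp.2
    have := h1
    nlinarith [abs_nonneg (z i - (k i:ℝ))]
  calc V0N d β N (z - intVec d k)
      ≤ (N:ℝ)^β * (cD d * Real.exp (1/4)) * Real.exp (-‖z - intVec d k‖) :=
        V0N_le hd hN hβ _
    _ ≤ (N:ℝ)^β * (cD d * Real.exp (1/4)) * ∏ i, Real.exp (-(d:ℝ)⁻¹ * |(z - intVec d k) i|) := by
        apply mul_le_mul_of_nonneg_left (exp_neg_norm_le_prod hd _)
        have := (cD_pos hd).le
        positivity
    _ ≤ _ := by
        apply mul_le_mul_of_nonneg_left _ (by have := (cD_pos hd).le; positivity)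
        exact Finset.prod_le_prod (fun i _ => (Real.exp_pos _).le) (fun i _ => hcoord i)

lemma VN_summable_term {d N : ℕ} {β : ℝ} (hd : 1 ≤ d) (hN : 1 ≤ N) (hβ : 0 < β)
    (z : EuclideanSpace ℝ (Fin d)) :
    Summable fun k : Fin d → ℤ => V0N d β N (z - intVec d k) := by
  have hd0 : (0:ℝ) < (d:ℝ) := by exact_mod_cast hd
  set r := Real.exp (-(d:ℝ)⁻¹) with hr
  have hr0 : 0 ≤ r := (Real.exp_pos _).le
  have hr1 : r < 1 := by
    rw [hr]
    apply Real.exp_lt_one_iff.2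
    simp only [Left.neg_neg_iff]
    positivity
  have hmaj : Summable fun k : Fin d → ℤ =>
      ((N:ℝ)^β * (cD d * Real.exp (1/4)) * ∏ i, Real.exp ((d:ℝ)⁻¹ * |z i|)) *
        ∏ i, r ^ (k i).natAbs := by
    apply Summable.mul_left
    exact aux_summable_pi (g := fun m => r ^ m.natAbs) (T := 2 * (1 - r)⁻¹)
      (fun m => pow_nonneg hr0 _) (aux_sum_int_pow_le hr0 hr1)
  apply Summable.of_nonneg_of_le (fun k => V0N_nonneg hd _ _ _) _ hmaj
  intro k
  refine le_trans (V0N_term_le hd hN hβ z k) (le_of_eq ?_)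
  rw [Finset.prod_mul_distrib]
  ring

lemma VN_nonneg {d N : ℕ} {β : ℝ} (hd : 1 ≤ d) (z : EuclideanSpace ℝ (Fin d)) :
    0 ≤ VN d β N z := by
  rw [VN]
  exact tsum_nonneg fun k => V0N_nonneg hd _ _ _

lemma VN_le_of_box {d N : ℕ} {β : ℝ} (hd : 1 ≤ d) (hN : 1 ≤ N) (hβ : 0 < β)
    (z : EuclideanSpace ℝ (Fin d)) (hz : ∀ i, |z i| ≤ 1) :
    VN d β N z ≤ (N:ℝ)^β * (cD d * Real.exp (1/4) *
      (Real.exp ((d:ℝ)⁻¹) * (2 * (1 - Real.exp (-(d:ℝ)⁻¹))⁻¹)) ^ d) := by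
  have hd0 : (0:ℝ) < (d:ℝ) := by exact_mod_cast hd
  set r := Real.exp (-(d:ℝ)⁻¹) with hr
  have hr0 : 0 ≤ r := (Real.exp_pos _).le
  have hr1 : r < 1 := by
    rw [hr]
    apply Real.exp_lt_one_iff.2
    simp only [Left.neg_neg_iff]
    positivity
  have hc := (cD_pos hd).le
  rw [VN]
  apply Summable.tsum_le_of_sum_le (VN_summable_term hd hN hβ z)
  intro s
  have hterm : ∀ k : Fin d → ℤ, V0N d β N (z - intVec d k) ≤
      (N:ℝ)^β * (cD d * Real.exp (1/4)) *
        ∏ i, (Real.exp ((d:ℝ)⁻¹) * r ^ (k i).natAbs) := by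
    intro k
    refine le_trans (V0N_term_le hd hN hβ z k) ?_
    apply mul_le_mul_of_nonneg_left _ (by positivity)
    apply Finset.prod_le_prod (fun i _ => by positivity)
    intro i _
    apply mul_le_mul_of_nonneg_right _ (pow_nonneg hr0 _)
    apply Real.exp_le_exp.2
    have h1 := hz i
    have h2 := abs_nonneg (z i)
    have h3 : (0:ℝ) ≤ (d:ℝ)⁻¹ := by positivity
    nlinarith
  calc ∑ k ∈ s, V0N d β N (z - intVec d k)
      ≤ ∑ k ∈ s, (N:ℝ)^β * (cD d * Real.exp (1/4)) *
          ∏ i, (Real.exp ((d:ℝ)⁻¹) * r ^ (k i).natAbs) :=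
        Finset.sum_le_sum fun k _ => hterm k
    _ = (N:ℝ)^β * (cD d * Real.exp (1/4)) *
          ∑ k ∈ s, ∏ i, (Real.exp ((d:ℝ)⁻¹) * r ^ (k i).natAbs) := by
        rw [Finset.mul_sum]
    _ ≤ (N:ℝ)^β * (cD d * Real.exp (1/4)) *
          (Real.exp ((d:ℝ)⁻¹) * (2 * (1 - r)⁻¹)) ^ d := by
        apply mul_le_mul_of_nonneg_left _ (by positivity)
        apply aux_sum_pi_le (g := fun m => Real.exp ((d:ℝ)⁻¹) * r ^ m.natAbs)
          (T := Real.exp ((d:ℝ)⁻¹) * (2 * (1 - r)⁻¹)) (fun m => by positivity)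
        intro t
        calc ∑ m ∈ t, Real.exp ((d:ℝ)⁻¹) * r ^ m.natAbs
            = Real.exp ((d:ℝ)⁻¹) * ∑ m ∈ t, r ^ m.natAbs := by rw [Finset.mul_sum]
          _ ≤ Real.exp ((d:ℝ)⁻¹) * (2 * (1 - r)⁻¹) :=
            mul_le_mul_of_nonneg_left (aux_sum_int_pow_le hr0 hr1 t) (Real.exp_pos _).le
    _ = _ := by ring

lemma V0_measurable (d : ℕ) : Measurable (V0 d) := by
  unfold V0
  apply Measurable.ite
  · exact measurableSet_le continuous_norm.measurable measurable_const
  · exact measurable_const.mul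
      (Real.measurable_exp.comp ((continuous_norm.measurable.pow_const 2).neg))
  · exact measurable_const.mul (Real.measurable_exp.comp continuous_norm.measurable.neg)

lemma VN_meas {d N : ℕ} {β : ℝ} (hd : 1 ≤ d) (hN : 1 ≤ N) (hβ : 0 < β)
    (a : EuclideanSpace ℝ (Fin d)) :
    Measurable fun x => VN d β N (x - a) := by
  have hterm : ∀ k : Fin d → ℤ, Measurable fun x : EuclideanSpace ℝ (Fin d) =>
      V0N d β N (x - a - intVec d k) := by
    intro k
    have h1 : Measurable fun x : EuclideanSpace ℝ (Fin d) => x - a - intVec d k :=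
      (((continuous_id.sub continuous_const).sub continuous_const)).measurable
    have h2 : Measurable fun y : EuclideanSpace ℝ (Fin d) => V0N d β N y := by
      unfold V0N
      exact measurable_const.mul ((V0_measurable d).comp (continuous_const_smul _).measurable)
    exact h2.comp h1
  have key : (fun x => VN d β N (x - a)) = fun x =>
      (∑' k : Fin d → ℤ, ENNReal.ofReal (V0N d β N (x - a - intVec d k))).toReal := by
    funext x
    rw [VN]
    have h0 : ∀ k : Fin d → ℤ, 0 ≤ V0N d β N (x - a - intVec d k) :=
      fun k => V0N_nonneg hd _ _ _
    have hs : Summable fun k : Fin d → ℤ => V0N d β N (x - a - intVec d k) :=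
      VN_summable_term hd hN hβ (x - a)
    rw [← ENNReal.ofReal_tsum_of_nonneg h0 hs, ENNReal.toReal_ofReal (tsum_nonneg h0)]
  rw [key]
  exact ENNReal.measurable_toReal.comp
    (Measurable.ennreal_tsum fun k => ENNReal.measurable_ofReal.comp (hterm k))

lemma abs_mul_log_le {t ρx M lam : ℝ} (hM : 1 ≤ M) (ht0 : 0 ≤ t) (htM : t ≤ M)
    (hlam : 1 < lam) (hρ1 : lam⁻¹ ≤ ρx) (hρ2 : ρx ≤ lam) :
    |t * Real.log (t / ρx)| ≤ M * Real.log M + M * Real.log lam + 1 := by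
  have hlam0 : (0:ℝ) < lam := by linarith
  have hρ0 : 0 < ρx := lt_of_lt_of_le (inv_pos.2 hlam0) hρ1
  have hlogM : 0 ≤ Real.log M := Real.log_nonneg hM
  have hloglam : 0 ≤ Real.log lam := (Real.log_pos hlam).le
  have hM0 : (0:ℝ) < M := by linarith
  rcases eq_or_lt_of_le ht0 with h0 | ht
  · rw [← h0, zero_mul, abs_zero]
    nlinarith [mul_nonneg hM0.le hlogM, mul_nonneg hM0.le hloglam]
  · rw [Real.log_div (ne_of_gt ht) (ne_of_gt hρ0)]
    have hlogρ : |Real.log ρx| ≤ Real.log lam := by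
      rw [abs_le]
      constructor
      · rw [← Real.log_inv]
        exact Real.log_le_log (inv_pos.2 hlam0) hρ1
      · exact Real.log_le_log hρ0 hρ2
    have ht_log : t * |Real.log t| ≤ M * Real.log M + 1 := by
      rcases le_or_gt 1 t with h1 | h1
      · rw [abs_of_nonneg (Real.log_nonneg h1)]
        have h2 : Real.log t ≤ Real.log M := Real.log_le_log ht htM
        nlinarith [Real.log_nonneg h1]
      · rw [abs_of_nonpos (Real.log_nonpos ht0 h1.le)]
        have h2 : Real.log t⁻¹ ≤ t⁻¹ - 1 := Real.log_le_sub_one_of_pos (inv_pos.2 ht)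
        rw [Real.log_inv] at h2
        have h3 : t * -Real.log t ≤ t * (t⁻¹ - 1) :=
          mul_le_mul_of_nonneg_left h2 ht0
        have h4 : t * (t⁻¹ - 1) = 1 - t := by field_simp
        nlinarith [mul_nonneg hM0.le hlogM]
    calc |t * (Real.log t - Real.log ρx)|
        ≤ t * |Real.log t| + t * |Real.log ρx| := by
          rw [abs_mul, abs_of_nonneg ht0]
          have h5 := abs_sub (Real.log t) (Real.log ρx)
          nlinarith [mul_le_mul_of_nonneg_left h5 ht0]
      _ ≤ (M * Real.log M + 1) + M * Real.log lam := by
          have h5 : t * |Real.log ρx| ≤ M * Real.log lam :=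
            mul_le_mul htM hlogρ (abs_nonneg _) hM0.le
          linarith
      _ = _ := by ring

lemma boxC_closed (d : ℕ) : IsClosed (boxC d) := by
  have h : boxC d = ⋂ i, (fun x : EuclideanSpace ℝ (Fin d) => x i) ⁻¹'
      Set.Icc (-(1/2):ℝ) (1/2) := by
    ext x
    simp [boxC, Set.mem_iInter]
  rw [h]
  exact isClosed_iInter fun i =>
    IsClosed.preimage (EuclideanSpace.proj i).continuous isClosed_Icc

lemma boxC_vol_lt_top {d : ℕ} (hd : 1 ≤ d) : volume (boxC d) < ⊤ := by
  have hd0 : (0:ℝ) < (d:ℝ) := by exact_mod_cast hd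
  have hd1 : (1:ℝ) ≤ (d:ℝ) := by exact_mod_cast hd
  have hsub : boxC d ⊆ Metric.closedBall (0 : EuclideanSpace ℝ (Fin d)) (d:ℝ) := by
    intro x hx
    rw [Metric.mem_closedBall, dist_zero_right]
    have h1 : ‖x‖ ≤ Real.sqrt (d:ℝ) := by
      rw [EuclideanSpace.norm_eq]
      apply Real.sqrt_le_sqrt
      calc ∑ i, ‖x i‖^2 ≤ ∑ _i : Fin d, 1 := by
            apply Finset.sum_le_sum
            intro i _
            have h2 := hx i
            rw [Real.norm_eq_abs, sq_abs]
            nlinarith [h2.1, h2.2]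
        _ = (d:ℝ) := by simp
    have h2 : Real.sqrt (d:ℝ) ≤ (d:ℝ) := by
      have h3 : Real.sqrt (d:ℝ) ≤ Real.sqrt ((d:ℝ)^2) :=
        Real.sqrt_le_sqrt (by nlinarith)
      rwa [Real.sqrt_sq hd0.le] at h3
    linarith
  exact lt_of_le_of_lt (measure_mono hsub) measure_closedBall_lt_top

end Stmt18Aux

set_option maxHeartbeats 1000000 in
/-- the relative entropy of the mollified empirical density with respect to a
density pinched between `λ⁻¹` and `λ` is finite, with the explicit quantitative bound
`|H(ρ^N|ρ)| ≤ 2 e^{1/4} C_d N^β (ln(N^β) − ln(Γ(d/2)/(2π^{d/2})) + N^{2β/d} + ln 2 + 1/4 + C_d + ln λ)`. -/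
theorem stmt18 (d : ℕ) (hd : 1 ≤ d) (β lam : ℝ) (hβ : β ∈ Set.Ioo (0:ℝ) 1)
    (hlam : 1 < lam) :
    ∃ C : ℝ, 0 < C ∧ ∀ N : ℕ, 1 ≤ N →
      ∀ p : Fin N → EuclideanSpace ℝ (Fin d), (∀ i, p i ∈ boxC d) →
      ∀ ρ : EuclideanSpace ℝ (Fin d) → ℝ, Measurable ρ →
        (∀ x ∈ boxC d, lam⁻¹ ≤ ρ x ∧ ρ x ≤ lam) →
        IntegrableOn (fun x => ((1/(N:ℝ)) * ∑ i, VN d β N (x - p i)) *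
            Real.log (((1/(N:ℝ)) * ∑ i, VN d β N (x - p i)) / ρ x)) (boxC d) ∧
        |∫ x in boxC d, ((1/(N:ℝ)) * ∑ i, VN d β N (x - p i)) *
            Real.log (((1/(N:ℝ)) * ∑ i, VN d β N (x - p i)) / ρ x)|
          ≤ 2 * Real.exp (1/4) * C * (N:ℝ)^β *
            (Real.log ((N:ℝ)^β)
              - Real.log (Real.Gamma ((d:ℝ)/2) / (2 * Real.pi ^ ((d:ℝ)/2)))
              + (N:ℝ)^(2*β/(d:ℝ)) + Real.log 2 + 1/4 + C + Real.log lam) := by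
  obtain ⟨hβ0, hβ1⟩ := hβ
  have hd0 : (0:ℝ) < (d:ℝ) := by exact_mod_cast hd
  have hc0 : 0 < cD d := cD_pos hd
  have hr1 : Real.exp (-(d:ℝ)⁻¹) < 1 := by
    apply Real.exp_lt_one_iff.2
    simp only [Left.neg_neg_iff]
    positivity
  obtain ⟨K, hK_def⟩ : ∃ K : ℝ,
      K = (Real.exp ((d:ℝ)⁻¹) * (2 * (1 - Real.exp (-(d:ℝ)⁻¹))⁻¹)) ^ d := ⟨_, rfl⟩
  have hK0 : 0 ≤ K := by
    rw [hK_def]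
    apply pow_nonneg
    apply mul_nonneg (Real.exp_pos _).le
    have h1 : 0 ≤ (1 - Real.exp (-(d:ℝ)⁻¹))⁻¹ := inv_nonneg.2 (by linarith)
    linarith
  obtain ⟨A, hA_def⟩ : ∃ A : ℝ, A = cD d * Real.exp (1/4) * K + 1 := ⟨_, rfl⟩
  have hA1 : 1 ≤ A := by
    rw [hA_def]
    nlinarith [mul_nonneg (mul_nonneg hc0.le (Real.exp_pos (1/4:ℝ)).le) hK0]
  have hA0 : (0:ℝ) < A := by linarith
  have hlogA : 0 ≤ Real.log A := Real.log_nonneg hA1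
  obtain ⟨Vv, hVv_def⟩ : ∃ Vv : ℝ, Vv = (volume (boxC d)).toReal := ⟨_, rfl⟩
  have hVv0 : 0 ≤ Vv := hVv_def ▸ ENNReal.toReal_nonneg
  have hvol : volume (boxC d) < ⊤ := boxC_vol_lt_top hd
  obtain ⟨C, hC_def⟩ : ∃ C : ℝ, C = Vv * A + Real.log A + |Real.log (cD d)| + 1 := ⟨_, rfl⟩
  have hC0 : 0 < C := by
    rw [hC_def]
    nlinarith [mul_nonneg hVv0 hA0.le, abs_nonneg (Real.log (cD d))]
  refine ⟨C, hC0, ?_⟩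
  intro N hN p hp ρ hρmeas hρbd
  have hNr1 : (1:ℝ) ≤ (N:ℝ) := by exact_mod_cast hN
  have hNβ1 : 1 ≤ (N:ℝ)^β := Real.one_le_rpow hNr1 hβ0.le
  have hNβ0 : 0 < (N:ℝ)^β := by linarith
  have hloglam : 0 ≤ Real.log lam := (Real.log_pos hlam).le
  have hzij : ∀ x ∈ boxC d, ∀ i : Fin N, ∀ j, |(x - p i) j| ≤ 1 := by
    intro x hx i j
    have h1 := hx j
    have h2 := (hp i) j
    have h3 : (x - p i) j = x j - p i j := rfl
    rw [h3, abs_le]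
    exact ⟨by linarith [h1.1, h2.2], by linarith [h1.2, h2.1]⟩
  have hM1 : 1 ≤ A * (N:ℝ)^β := by nlinarith
  have ht_bd : ∀ x ∈ boxC d, 0 ≤ (1/(N:ℝ)) * ∑ i, VN d β N (x - p i) ∧
      (1/(N:ℝ)) * ∑ i, VN d β N (x - p i) ≤ A * (N:ℝ)^β := by
    intro x hx
    constructor
    · apply mul_nonneg (by positivity)
      exact Finset.sum_nonneg fun i _ => VN_nonneg hd _
    · have hsum : ∑ i, VN d β N (x - p i)
          ≤ (N:ℝ) * ((N:ℝ)^β * (cD d * Real.exp (1/4) * K)) := by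
        have h1 : ∀ i ∈ Finset.univ, VN d β N (x - p i)
            ≤ (N:ℝ)^β * (cD d * Real.exp (1/4) * K) := by
          intro i _
          rw [hK_def]
          exact VN_le_of_box hd hN hβ0 (x - p i) (hzij x hx i)
        calc ∑ i, VN d β N (x - p i)
            ≤ Finset.univ.card • ((N:ℝ)^β * (cD d * Real.exp (1/4) * K)) :=
              Finset.sum_le_card_nsmul _ _ _ h1
          _ = (N:ℝ) * ((N:ℝ)^β * (cD d * Real.exp (1/4) * K)) := by
              simp [nsmul_eq_mul]
      have hNne : (N:ℝ) ≠ 0 := by linarith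
      calc (1/(N:ℝ)) * ∑ i, VN d β N (x - p i)
          ≤ (1/(N:ℝ)) * ((N:ℝ) * ((N:ℝ)^β * (cD d * Real.exp (1/4) * K))) := by
            apply mul_le_mul_of_nonneg_left hsum (by positivity)
        _ = (N:ℝ)^β * (cD d * Real.exp (1/4) * K) := by field_simp
        _ ≤ A * (N:ℝ)^β := by rw [hA_def]; nlinarith [hNβ0.le]
  have htmeas : Measurable fun x : EuclideanSpace ℝ (Fin d) =>
      (1/(N:ℝ)) * ∑ i, VN d β N (x - p i) :=
    Measurable.const_mul (Finset.measurable_sum _ (fun i _ => VN_meas hd hN hβ0 (p i))) _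
  have hfmeas : Measurable fun x : EuclideanSpace ℝ (Fin d) =>
      ((1/(N:ℝ)) * ∑ i, VN d β N (x - p i)) *
        Real.log (((1/(N:ℝ)) * ∑ i, VN d β N (x - p i)) / ρ x) :=
    htmeas.mul (Real.measurable_log.comp (htmeas.div hρmeas))
  have hbd : ∀ x ∈ boxC d,
      |((1/(N:ℝ)) * ∑ i, VN d β N (x - p i)) *
        Real.log (((1/(N:ℝ)) * ∑ i, VN d β N (x - p i)) / ρ x)|
      ≤ A * (N:ℝ)^β * Real.log (A * (N:ℝ)^β) + A * (N:ℝ)^β * Real.log lam + 1 :=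
    fun x hx => abs_mul_log_le hM1 (ht_bd x hx).1 (ht_bd x hx).2 hlam
      (hρbd x hx).1 (hρbd x hx).2
  have hCmeas : MeasurableSet (boxC d) := (boxC_closed d).measurableSet
  have h_ae : ∀ᵐ x ∂(volume.restrict (boxC d)),
      ‖((1/(N:ℝ)) * ∑ i, VN d β N (x - p i)) *
        Real.log (((1/(N:ℝ)) * ∑ i, VN d β N (x - p i)) / ρ x)‖
      ≤ A * (N:ℝ)^β * Real.log (A * (N:ℝ)^β) + A * (N:ℝ)^β * Real.log lam + 1 := by
    rw [ae_restrict_iff' hCmeas]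
    exact ae_of_all _ fun x hx => by rw [Real.norm_eq_abs]; exact hbd x hx
  have hInt : IntegrableOn (fun x => ((1/(N:ℝ)) * ∑ i, VN d β N (x - p i)) *
      Real.log (((1/(N:ℝ)) * ∑ i, VN d β N (x - p i)) / ρ x)) (boxC d) :=
    Integrable.mono' (integrableOn_const hvol.ne)
      hfmeas.aestronglyMeasurable h_ae
  refine ⟨hInt, ?_⟩
  haveI : IsFiniteMeasure (volume.restrict (boxC d)) :=
    ⟨by rwa [Measure.restrict_apply_univ]⟩
  have hint_le := norm_integral_le_of_norm_le_const h_ae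
  rw [measureReal_restrict_apply_univ, measureReal_def, ← hVv_def] at hint_le
  -- arithmetic
  have hlogNβ : 0 ≤ Real.log ((N:ℝ)^β) := Real.log_nonneg hNβ1
  have hlogM_eq : Real.log (A * (N:ℝ)^β) = Real.log A + Real.log ((N:ℝ)^β) :=
    Real.log_mul (ne_of_gt hA0) (ne_of_gt hNβ0)
  have hN2 : 1 ≤ (N:ℝ)^(2*β/(d:ℝ)) := Real.one_le_rpow hNr1 (by positivity)
  have hlog2 : 0 ≤ Real.log 2 := Real.log_nonneg one_le_two
  have he1 : 1 ≤ Real.exp (1/4 : ℝ) := Real.one_le_exp (by norm_num)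
  have habs : Real.log (cD d) ≤ |Real.log (cD d)| := le_abs_self _
  have hVA : Vv * A ≤ C := by
    rw [hC_def]
    nlinarith [abs_nonneg (Real.log (cD d))]
  have hcD_eq : Real.log (Real.Gamma ((d:ℝ)/2) / (2 * Real.pi ^ ((d:ℝ)/2)))
      = Real.log (cD d) := rfl
  rw [hcD_eq]
  have hE : Real.log A + Real.log lam + 1
      ≤ - Real.log (cD d) + (N:ℝ)^(2*β/(d:ℝ)) + Real.log 2 + 1/4 + C + Real.log lam := by
    rw [hC_def]
    nlinarith [mul_nonneg hVv0 hA0.le]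
  have hD1 : (1:ℝ) ≤ Real.log A + Real.log lam + 1 := by linarith
  have h2 : Vv * A * (Real.log ((N:ℝ)^β) + (Real.log A + Real.log lam + 1))
      ≤ (2 * Real.exp (1/4) * C) * (Real.log ((N:ℝ)^β) +
        (- Real.log (cD d) + (N:ℝ)^(2*β/(d:ℝ)) + Real.log 2 + 1/4 + C + Real.log lam)) := by
    calc Vv * A * (Real.log ((N:ℝ)^β) + (Real.log A + Real.log lam + 1))
        ≤ C * (Real.log ((N:ℝ)^β) + (Real.log A + Real.log lam + 1)) :=
          mul_le_mul_of_nonneg_right hVA (by linarith)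
      _ ≤ C * (Real.log ((N:ℝ)^β) +
          (- Real.log (cD d) + (N:ℝ)^(2*β/(d:ℝ)) + Real.log 2 + 1/4 + C + Real.log lam)) := by
          apply mul_le_mul_of_nonneg_left _ hC0.le
          linarith
      _ ≤ _ := by
          apply mul_le_mul_of_nonneg_right _ (by linarith)
          nlinarith [hC0.le, he1]
  have h1 : A * (N:ℝ)^β * Real.log (A * (N:ℝ)^β) + A * (N:ℝ)^β * Real.log lam + 1
      ≤ A * (N:ℝ)^β * (Real.log ((N:ℝ)^β) + (Real.log A + Real.log lam + 1)) := by
    rw [hlogM_eq]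
    nlinarith [hM1]
  calc |∫ x in boxC d, ((1/(N:ℝ)) * ∑ i, VN d β N (x - p i)) *
          Real.log (((1/(N:ℝ)) * ∑ i, VN d β N (x - p i)) / ρ x)|
      = ‖∫ x in boxC d, ((1/(N:ℝ)) * ∑ i, VN d β N (x - p i)) *
          Real.log (((1/(N:ℝ)) * ∑ i, VN d β N (x - p i)) / ρ x)‖ :=
        (Real.norm_eq_abs _).symm
    _ ≤ (A * (N:ℝ)^β * Real.log (A * (N:ℝ)^β) + A * (N:ℝ)^β * Real.log lam + 1) * Vv :=
        hint_le
    _ ≤ (A * (N:ℝ)^β * (Real.log ((N:ℝ)^β) + (Real.log A + Real.log lam + 1))) * Vv :=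
        mul_le_mul_of_nonneg_right h1 hVv0
    _ = (Vv * A * (Real.log ((N:ℝ)^β) + (Real.log A + Real.log lam + 1))) * (N:ℝ)^β := by
        ring
    _ ≤ ((2 * Real.exp (1/4) * C) * (Real.log ((N:ℝ)^β) +
          (- Real.log (cD d) + (N:ℝ)^(2*β/(d:ℝ)) + Real.log 2 + 1/4 + C + Real.log lam)))
          * (N:ℝ)^β :=
        mul_le_mul_of_nonneg_right h2 hNβ0.le
    _ = 2 * Real.exp (1/4) * C * (N:ℝ)^β *
          (Real.log ((N:ℝ)^β) - Real.log (cD d)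
            + (N:ℝ)^(2*β/(d:ℝ)) + Real.log 2 + 1/4 + C + Real.log lam) := by
        ring
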